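/- Let T be a positive operator in the Dixmier ideal M_{1,∞} and ω an exponentiation invariant generalized limit on L∞(0,∞). Then Tr_ω(T) = ω(t ↦ (1/log(1+t))∫₀^{d_T(1/t)} μ(s,T) ds), where d_T(s) = Tr(χ_{(s,∞)}(T)) is the distribution function of T. -/

import Mathlib

open Real Filter MeasureTheory

noncomputable section

/-- A function on `(0,∞)` (modelled on all of `ℝ`) is (essentially) bounded. -/
def Bdd (f : ℝ → ℝ) : Prop := ∃ C, ∀ t, |f t| ≤ C

/-- A generalized limit: a positive, normalized linear functional on `L∞(0,∞)`
(modelled as bounded functions `ℝ → ℝ`) which extends the limit at infinity. -/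
structure GenLimit where
  ω : (ℝ → ℝ) → ℝ
  add : ∀ f g, Bdd f → Bdd g → ω (f + g) = ω f + ω g
  smul : ∀ (c : ℝ) f, Bdd f → ω (c • f) = c * ω f
  pos : ∀ f, Bdd f → (∀ t, 0 ≤ f t) → 0 ≤ ω f
  lim : ∀ f (c : ℝ), Bdd f → Tendsto f atTop (nhds c) → ω f = c

/-- Exponentiation invariance: `ω(x ∘ (t ↦ t^a)) = ω(x)` for all `a > 0`. -/
def GenLimit.ExpInvariant (γ : GenLimit) : Prop :=
  ∀ f, Bdd f → ∀ a > (0:ℝ), γ.ω (fun t => f (t ^ a)) = γ.ω f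

/-- Dilation invariance: `ω(x ∘ (t ↦ βt)) = ω(x)` for all `β > 0`. -/
def GenLimit.DilInvariant (γ : GenLimit) : Prop :=
  ∀ f, Bdd f → ∀ β > (0:ℝ), γ.ω (fun t => f (β * t)) = γ.ω f

/-- Translation invariance: `ω(x(·+l)) = ω(x)` for all `l > 0`. -/
def GenLimit.TransInvariant (γ : GenLimit) : Prop :=
  ∀ f, Bdd f → ∀ l > (0:ℝ), γ.ω (fun t => f (t + l)) = γ.ω f

variable {H : Type*} [NormedAddCommGroup H] [InnerProductSpace ℂ H] [CompleteSpace H]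

/-- The singular value function `μ(s,T) = inf {‖Tp‖ : p projection, Tr(1-p) ≤ s}`. -/
def sv (T : H →L[ℂ] H) (s : ℝ) : ℝ :=
  sInf {c : ℝ | ∃ p : H →L[ℂ] H, IsIdempotentElem p ∧ IsSelfAdjoint p ∧
    ∃ _ : FiniteDimensional ℂ (LinearMap.range ((1 - p : H →L[ℂ] H) : H →ₗ[ℂ] H)),
      (Module.finrank ℂ (LinearMap.range ((1 - p : H →L[ℂ] H) : H →ₗ[ℂ] H)) : ℝ) ≤ s ∧
      c = ‖T ∘L p‖}

/-- The Cesàro-type averages `t ↦ (1/log(1+t)) ∫₀ᵗ μ(s,T) ds`. -/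
def avg (T : H →L[ℂ] H) : ℝ → ℝ :=
  fun t => (Real.log (1 + t))⁻¹ * ∫ s in (0:ℝ)..t, sv T s

/-- Membership in the Dixmier ideal `M_{1,∞}`. -/
def MemM1Inf (T : H →L[ℂ] H) : Prop :=
  IsCompactOperator ⇑T ∧ ∃ C, ∀ t > (0:ℝ), avg T t ≤ C

/-- The distribution function `d_T` of `T`, realized as the distribution function of the
singular value function `μ(·,T)` (with which it coincides, by Fack–Kosaki). -/
def dFun (T : H →L[ℂ] H) (t : ℝ) : ℝ :=
  (volume {s : ℝ | 0 ≤ s ∧ t < sv T s}).toReal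

/-!
Everything happens at the level of the nonnegative antitone function `μ = μ(·, T)`, for which
`T ∈ M_{1,∞}` gives `∫₀ᵗ μ ≤ C log (1 + t)`; write `d = d_T`. Beyond `d(1/t)` we have
`μ ≤ 1/t`, so cutting `∫₀ᵗ μ` at `d(1/t)` loses at most `1`, which `1 / log (1 + t)` sends
to `0`: this gives `Tr_ω(T) ≤ ω(cutoff)`. Conversely, for every `a > 1` eventually
`d(1/t) ≤ t ^ a` and `log (1 + t ^ a) ≤ a log (1 + t)`, so the cutoff average at `t` is at most
`a` times the average at `t ^ a`; exponentiation invariance turns this into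
`ω(cutoff) ≤ a Tr_ω(T)`, and `a → 1`.
-/

open Set intervalIntegral Topology

lemma Real.log_one_add_le_two_mul_sqrt {s : ℝ} (hs : 0 ≤ s) : log (1 + s) ≤ 2 * √s := by
  have h : 1 + s ≤ (1 + √s) ^ 2 := by nlinarith [sq_sqrt hs, sqrt_nonneg s]
  calc log (1 + s) ≤ log ((1 + √s) ^ 2) := log_le_log (by positivity) h
    _ = 2 * log (1 + √s) := by rw [log_pow]; norm_num
    _ ≤ 2 * √s := by linarith [log_le_sub_one_of_pos (show 0 < 1 + √s by positivity)]

lemma le_sq_of_le_mul_log_one_add {c x : ℝ} (hx : 0 ≤ x) (h : x ≤ c * log (1 + x)) :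
    x ≤ (2 * c) ^ 2 := by
  rcases hx.eq_or_lt with rfl | hx
  · positivity
  have hlog : 0 < log (1 + x) := log_pos (by linarith)
  have hc : 0 < c := pos_of_mul_pos_left (hx.trans_le h) hlog.le
  have hsqrt : √x ≤ 2 * c := by
    have := h.trans (mul_le_mul_of_nonneg_left (log_one_add_le_two_mul_sqrt hx.le) hc.le)
    nlinarith [sq_sqrt hx.le, sqrt_pos.2 hx]
  calc x = √x ^ 2 := (sq_sqrt hx.le).symm
    _ ≤ (2 * c) ^ 2 := pow_le_pow_left₀ (sqrt_nonneg x) hsqrt 2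

lemma Real.log_one_add_rpow_le {a t : ℝ} (ha : 1 ≤ a) (ht : 0 ≤ t) :
    log (1 + t ^ a) ≤ a * log (1 + t) := by
  rw [← log_rpow (by linarith)]
  refine log_le_log (by positivity) ?_
  simpa using add_rpow_le_rpow_add zero_le_one ht ha

lemma Real.log_one_add_mul_le {c t : ℝ} (hc : 0 ≤ c) (ht : 0 ≤ t) :
    log (1 + c * t) ≤ log (1 + c) + log (1 + t) := by
  rw [← log_mul (by positivity) (by positivity)]
  exact log_le_log (by positivity) (by nlinarith)

lemma Real.eventually_mul_log_one_add_lt_rpow (c : ℝ) {r : ℝ} (hr : 0 < r) :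
    ∀ᶠ t in atTop, c * log (1 + t) < t ^ r := by
  filter_upwards [((isLittleO_log_rpow_atTop hr).const_mul_left (2 * |c|)).bound one_half_pos,
    eventually_ge_atTop 2] with t hbound ht
  have htr : 0 < t ^ r := rpow_pos_of_pos (by linarith) r
  have hlog : log (1 + t) ≤ 2 * log t := by
    calc log (1 + t) ≤ log (t ^ 2) := log_le_log (by linarith) (by nlinarith)
      _ = 2 * log t := by rw [log_pow]; norm_num
  have hlog0 : 0 ≤ log (1 + t) := log_nonneg (by linarith)
  rw [Real.norm_of_nonneg htr.le, Real.norm_eq_abs] at hbound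
  calc c * log (1 + t) ≤ |c| * log (1 + t) := mul_le_mul_of_nonneg_right (le_abs_self c) hlog0
    _ ≤ 2 * |c| * log t := by nlinarith [abs_nonneg c]
    _ ≤ 1 / 2 * t ^ r := (le_abs_self _).trans hbound
    _ < t ^ r := by linarith

lemma Real.volume_eq_ofReal_of_Ico_subset_of_subset_Icc {S : Set ℝ} {a b : ℝ}
    (h₁ : Ico a b ⊆ S) (h₂ : S ⊆ Icc a b) : volume S = ENNReal.ofReal (b - a) :=
  le_antisymm ((measure_mono h₂).trans_eq Real.volume_Icc) (Real.volume_Ico ▸ measure_mono h₁)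

lemma Ico_subset_and_subset_Icc_toReal_volume {S : Set ℝ} (hS : S ⊆ Ici 0)
    (hlower : ∀ s ∈ S, Icc 0 s ⊆ S) (hbdd : BddAbove S) :
    Ico 0 (volume S).toReal ⊆ S ∧ S ⊆ Icc 0 (volume S).toReal := by
  rcases S.eq_empty_or_nonempty with rfl | hne
  · simp
  have h₁ : Ico 0 (sSup S) ⊆ S := fun x ⟨hx0, hx⟩ ↦
    let ⟨s, hs, hxs⟩ := exists_lt_of_lt_csSup hne hx
    hlower s hs ⟨hx0, hxs.le⟩
  have h₂ : S ⊆ Icc 0 (sSup S) := fun s hs ↦ ⟨hS hs, le_csSup hbdd hs⟩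
  have hb : 0 ≤ sSup S := (hS hne.some_mem).trans (le_csSup hbdd hne.some_mem)
  rw [Real.volume_eq_ofReal_of_Ico_subset_of_subset_Icc h₁ h₂, sub_zero, ENNReal.toReal_ofReal hb]
  exact ⟨h₁, h₂⟩

section Distribution

variable {f : ℝ → ℝ} {d u s t x : ℝ}

/-- `dFun T = distribution (sv T)`. -/
def distribution (f : ℝ → ℝ) (u : ℝ) : ℝ := (volume {s : ℝ | 0 ≤ s ∧ u < f s}).toReal

lemma distribution_nonneg : 0 ≤ distribution f u := ENNReal.toReal_nonneg

lemma distribution_of_neg (hf0 : ∀ s, 0 ≤ f s) (hu : u < 0) : distribution f u = 0 := by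
  have : {s : ℝ | 0 ≤ s ∧ u < f s} = Ici 0 := by
    ext s
    simpa using fun _ ↦ hu.trans_le (hf0 s)
  rw [distribution, this, Real.volume_Ici, ENNReal.toReal_top]

lemma AntitoneOn.Ico_subset_and_subset_Icc_distribution (hf : AntitoneOn f (Ici 0))
    (hbdd : BddAbove {s | 0 ≤ s ∧ u < f s}) :
    Ico 0 (distribution f u) ⊆ {s | 0 ≤ s ∧ u < f s} ∧
      {s | 0 ≤ s ∧ u < f s} ⊆ Icc 0 (distribution f u) :=
  Ico_subset_and_subset_Icc_toReal_volume (fun _ hs ↦ hs.1)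
    (fun _ ⟨hs0, hs⟩ _ ⟨hx0, hxs⟩ ↦ ⟨hx0, hs.trans_le (hf hx0 hs0 hxs)⟩) hbdd

lemma AntitoneOn.lt_of_lt_distribution (hf : AntitoneOn f (Ici 0))
    (hbdd : BddAbove {s | 0 ≤ s ∧ u < f s}) (hs0 : 0 ≤ s) (hs : s < distribution f u) :
    u < f s :=
  ((hf.Ico_subset_and_subset_Icc_distribution hbdd).1 ⟨hs0, hs⟩).2

lemma AntitoneOn.le_of_distribution_lt (hf : AntitoneOn f (Ici 0))
    (hbdd : BddAbove {s | 0 ≤ s ∧ u < f s}) (hs : distribution f u < s) : f s ≤ u := by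
  by_contra! hus
  have := (hf.Ico_subset_and_subset_Icc_distribution hbdd).2 ⟨distribution_nonneg.trans hs.le, hus⟩
  exact hs.not_ge this.2

lemma AntitoneOn.intervalIntegrable_of_nonneg (hf : AntitoneOn f (Ici 0)) (hs : 0 ≤ s)
    (ht : 0 ≤ t) : IntervalIntegrable f volume s t :=
  (hf.mono fun _ hx ↦ (le_min hs ht).trans hx.1).intervalIntegrable

lemma AntitoneOn.integral_mono_right (hf : AntitoneOn f (Ici 0)) (hf0 : ∀ s, 0 ≤ f s)
    (hs : 0 ≤ s) (hst : s ≤ t) : ∫ x in 0..s, f x ≤ ∫ x in 0..t, f x :=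
  integral_mono_interval le_rfl hs hst (ae_of_all _ hf0)
    (hf.intervalIntegrable_of_nonneg le_rfl (hs.trans hst))

lemma AntitoneOn.mul_le_integral (hf : AntitoneOn f (Ici 0)) (hd : 0 ≤ d)
    (h : ∀ s ∈ Ioo 0 d, u ≤ f s) : u * d ≤ ∫ s in 0..d, f s := by
  have := integral_mono_on_of_le_Ioo hd intervalIntegrable_const
    (hf.intervalIntegrable_of_nonneg le_rfl hd) h
  simpa [mul_comm] using this

lemma AntitoneOn.integral_le_integral_add_mul (hf : AntitoneOn f (Ici 0)) (hd : 0 ≤ d)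
    (hdt : d ≤ t) (h : ∀ s ∈ Ioo d t, f s ≤ u) :
    ∫ s in 0..t, f s ≤ (∫ s in 0..d, f s) + u * (t - d) := by
  have := integral_mono_on_of_le_Ioo hdt (hf.intervalIntegrable_of_nonneg hd (hd.trans hdt))
    intervalIntegrable_const h
  rw [← integral_add_adjacent_intervals (hf.intervalIntegrable_of_nonneg le_rfl hd)
    (hf.intervalIntegrable_of_nonneg hd (hd.trans hdt))]
  simp only [intervalIntegral.integral_const, smul_eq_mul] at this
  linarith

lemma AntitoneOn.mul_le_integral_of_le_distribution (hf : AntitoneOn f (Ici 0))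
    (hbdd : BddAbove {s | 0 ≤ s ∧ u < f s}) (hx : 0 ≤ x) (hxd : x ≤ distribution f u) :
    u * x ≤ ∫ s in 0..x, f s :=
  hf.mul_le_integral hx fun _ hs ↦ (hf.lt_of_lt_distribution hbdd hs.1.le (hs.2.trans_le hxd)).le

lemma AntitoneOn.integral_le_integral_distribution_add_mul (hf : AntitoneOn f (Ici 0))
    (hf0 : ∀ s, 0 ≤ f s) (hbdd : BddAbove {s | 0 ≤ s ∧ u < f s}) (hu : 0 ≤ u) (ht : 0 ≤ t) :
    ∫ s in 0..t, f s ≤ (∫ s in 0..distribution f u, f s) + u * t := by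
  rcases le_or_gt t (distribution f u) with htd | hdt
  · nlinarith [hf.integral_mono_right hf0 ht htd]
  · have := hf.integral_le_integral_add_mul distribution_nonneg hdt.le
      fun s hs ↦ hf.le_of_distribution_lt hbdd hs.1
    nlinarith [(distribution_nonneg : 0 ≤ distribution f u)]

end Distribution

section LogBound

variable {f : ℝ → ℝ} {C a u : ℝ}

lemma nonneg_of_integral_le_mul_log (hf0 : ∀ s, 0 ≤ f s)
    (hC : ∀ x, 0 ≤ x → ∫ s in 0..x, f s ≤ C * log (1 + x)) : 0 ≤ C := by
  have h := (integral_nonneg zero_le_one fun s _ ↦ hf0 s).trans (hC 1 zero_le_one)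
  exact nonneg_of_mul_nonneg_left h (log_pos (by norm_num))

lemma AntitoneOn.bddAbove_superlevel (hf : AntitoneOn f (Ici 0))
    (hC : ∀ x, 0 ≤ x → ∫ s in 0..x, f s ≤ C * log (1 + x)) (hu : 0 < u) :
    BddAbove {s | 0 ≤ s ∧ u < f s} := by
  refine ⟨(2 * (C / u)) ^ 2, fun s ⟨hs0, hs⟩ ↦ le_sq_of_le_mul_log_one_add hs0 ?_⟩
  have := (hf.mul_le_integral hs0 fun x hx ↦ hs.le.trans (hf hx.1.le hs0 hx.2.le)).trans
    (hC s hs0)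
  rw [div_mul_eq_mul_div, le_div_iff₀ hu]
  linarith

lemma AntitoneOn.mul_distribution_le (hf : AntitoneOn f (Ici 0))
    (hC : ∀ x, 0 ≤ x → ∫ s in 0..x, f s ≤ C * log (1 + x)) (hu : 0 < u) :
    u * distribution f u ≤ C * log (1 + distribution f u) :=
  (hf.mul_le_integral_of_le_distribution (hf.bddAbove_superlevel hC hu) distribution_nonneg
    le_rfl).trans (hC _ distribution_nonneg)

lemma AntitoneOn.distribution_le_sq (hf : AntitoneOn f (Ici 0))
    (hC : ∀ x, 0 ≤ x → ∫ s in 0..x, f s ≤ C * log (1 + x)) (hu : 0 < u) :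
    distribution f u ≤ (2 * (C / u)) ^ 2 := by
  refine le_sq_of_le_mul_log_one_add distribution_nonneg ?_
  rw [div_mul_eq_mul_div, le_div_iff₀ hu, mul_comm]
  exact hf.mul_distribution_le hC hu

lemma AntitoneOn.le_of_distribution_pos (hf : AntitoneOn f (Ici 0))
    (hC : ∀ x, 0 ≤ x → ∫ s in 0..x, f s ≤ C * log (1 + x)) (hu : 0 < u)
    (hd : 0 < distribution f u) : u ≤ C := by
  have h := hf.mul_distribution_le hC hu
  have hlog : 0 < log (1 + distribution f u) := log_pos (by linarith)
  have hlog_le : log (1 + distribution f u) ≤ distribution f u := by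
    linarith [log_le_sub_one_of_pos (show 0 < 1 + distribution f u by linarith)]
  by_contra! hCu
  nlinarith [mul_le_mul_of_nonneg_left hlog_le hu.le, mul_lt_mul_of_pos_right hCu hlog]

/-- Otherwise `t ^ (a - 1) ≤ ∫₀^{t^a} f ≤ C a log (1 + t)`, which fails for large `t`. -/
lemma AntitoneOn.eventually_distribution_inv_le_rpow (hf : AntitoneOn f (Ici 0))
    (hf0 : ∀ s, 0 ≤ f s) (hC : ∀ x, 0 ≤ x → ∫ s in 0..x, f s ≤ C * log (1 + x)) (ha : 1 < a) :
    ∀ᶠ t in atTop, distribution f t⁻¹ ≤ t ^ a := by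
  filter_upwards [Real.eventually_mul_log_one_add_lt_rpow (C * a) (sub_pos.2 ha),
    eventually_gt_atTop 0] with t hlt ht
  by_contra! hd
  have hta : 0 ≤ t ^ a := rpow_nonneg ht.le a
  have h1 := hf.mul_le_integral_of_le_distribution (hf.bddAbove_superlevel hC (inv_pos.2 ht))
    hta hd.le
  have h2 : C * log (1 + t ^ a) ≤ C * a * log (1 + t) := by
    rw [mul_assoc]
    exact mul_le_mul_of_nonneg_left (Real.log_one_add_rpow_le ha.le ht.le)
      (nonneg_of_integral_le_mul_log hf0 hC)
  have h3 : t⁻¹ * t ^ a = t ^ (a - 1) := by rw [rpow_sub ht, rpow_one, inv_mul_eq_div]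
  linarith [hC _ hta]

end LogBound

section LogAverage

variable {f : ℝ → ℝ} {C a t : ℝ}

/-- `avg T = logAvg (sv T)`. -/
def logAvg (f : ℝ → ℝ) (t : ℝ) : ℝ := (log (1 + t))⁻¹ * ∫ s in 0..t, f s

def cutoffLogAvg (f : ℝ → ℝ) (t : ℝ) : ℝ :=
  (log (1 + t))⁻¹ * ∫ s in 0..distribution f t⁻¹, f s

lemma integral_eq_zero_of_nonpos (hfneg : ∀ s < 0, f s = 0) (ht : t ≤ 0) :
    ∫ s in 0..t, f s = 0 := by
  rw [integral_symm, integral_of_le ht, integral_Ioc_eq_integral_Ioo,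
    setIntegral_eq_zero_of_forall_eq_zero fun s hs ↦ hfneg s hs.2, neg_zero]

lemma logAvg_nonneg (hf0 : ∀ s, 0 ≤ f s) (hfneg : ∀ s < 0, f s = 0) (t : ℝ) :
    0 ≤ logAvg f t := by
  rcases le_or_gt t 0 with ht | ht
  · rw [logAvg, integral_eq_zero_of_nonpos hfneg ht, mul_zero]
  · exact mul_nonneg (inv_nonneg.2 (log_nonneg (by linarith)))
      (integral_nonneg ht.le fun s _ ↦ hf0 s)

lemma integral_le_mul_log_of_logAvg_le (hC : ∀ t > 0, logAvg f t ≤ C) {x : ℝ} (hx : 0 ≤ x) :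
    ∫ s in 0..x, f s ≤ C * log (1 + x) := by
  rcases hx.eq_or_lt with rfl | hx
  · simp
  have := (inv_mul_le_iff₀ (log_pos (by linarith))).1 (hC x hx)
  linarith

lemma bdd_logAvg (hf0 : ∀ s, 0 ≤ f s) (hfneg : ∀ s < 0, f s = 0)
    (hC : ∀ t > 0, logAvg f t ≤ C) : Bdd (logAvg f) := by
  refine ⟨C, fun t ↦ ?_⟩
  rw [abs_of_nonneg (logAvg_nonneg hf0 hfneg t)]
  rcases le_or_gt t 0 with ht | ht
  · rw [logAvg, integral_eq_zero_of_nonpos hfneg ht, mul_zero]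
    exact (logAvg_nonneg hf0 hfneg 1).trans (hC 1 one_pos)
  · exact hC t ht

lemma cutoffLogAvg_of_nonpos (hf0 : ∀ s, 0 ≤ f s) (ht : t ≤ 0) : cutoffLogAvg f t = 0 := by
  rcases ht.eq_or_lt with rfl | ht
  · simp [cutoffLogAvg]
  · rw [cutoffLogAvg, distribution_of_neg hf0 (inv_lt_zero.2 ht), integral_same, mul_zero]

lemma cutoffLogAvg_nonneg (hf0 : ∀ s, 0 ≤ f s) (t : ℝ) : 0 ≤ cutoffLogAvg f t := by
  rcases le_or_gt t 0 with ht | ht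
  · rw [cutoffLogAvg_of_nonpos hf0 ht]
  · exact mul_nonneg (inv_nonneg.2 (log_nonneg (by linarith)))
      (integral_nonneg distribution_nonneg fun s _ ↦ hf0 s)

/-- The cutoff vanishes for `t < 1 / C`; beyond, `d(1/t) ≤ (2 C t)²` and
`log (1 + 2 C t) ≤ log (1 + 2 C) + log (1 + t)`. -/
lemma AntitoneOn.bdd_cutoffLogAvg (hf : AntitoneOn f (Ici 0)) (hf0 : ∀ s, 0 ≤ f s)
    (hC : ∀ x, 0 ≤ x → ∫ s in 0..x, f s ≤ C * log (1 + x)) : Bdd (cutoffLogAvg f) := by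
  have hC0 := nonneg_of_integral_le_mul_log hf0 hC
  set M := 2 * C * (log (1 + 2 * C) / log (1 + C⁻¹) + 1)
  have hM : 0 ≤ M := by
    have := log_nonneg (show 1 ≤ 1 + 2 * C by linarith)
    have := log_nonneg (show 1 ≤ 1 + C⁻¹ by linarith [inv_nonneg.2 hC0])
    positivity
  refine ⟨M, fun t ↦ ?_⟩
  rw [abs_of_nonneg (cutoffLogAvg_nonneg hf0 t)]
  rcases le_or_gt t 0 with ht | ht
  · rw [cutoffLogAvg_of_nonpos hf0 ht]; exact hM
  set d := distribution f t⁻¹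
  rcases (distribution_nonneg : 0 ≤ d).eq_or_lt with hd | hd
  · rw [cutoffLogAvg, ← hd, integral_same, mul_zero]; exact hM
  have htC : t⁻¹ ≤ C := hf.le_of_distribution_pos hC (inv_pos.2 ht) hd
  have hC' : 0 < C := (inv_pos.2 ht).trans_le htC
  have hlog : 0 < log (1 + t) := log_pos (by linarith)
  have hlogC : log (1 + C⁻¹) ≤ log (1 + t) :=
    log_le_log (by positivity) (by linarith [inv_le_of_inv_le₀ ht htC])
  have hdle : log (1 + d) ≤ 2 * log (1 + 2 * C * t) := by
    have := hf.distribution_le_sq hC (inv_pos.2 ht)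
    rw [div_inv_eq_mul] at this
    calc log (1 + d) ≤ log ((1 + 2 * C * t) ^ 2) := log_le_log (by linarith) (by nlinarith)
      _ = 2 * log (1 + 2 * C * t) := by rw [log_pow]; norm_num
  have hsplit := Real.log_one_add_mul_le (by linarith : 0 ≤ 2 * C) ht.le
  have hratio : log (1 + 2 * C) / log (1 + t) ≤ log (1 + 2 * C) / log (1 + C⁻¹) :=
    div_le_div_of_nonneg_left (log_nonneg (by linarith))
      (log_pos (lt_add_of_pos_right 1 (inv_pos.2 hC'))) hlogC
  calc cutoffLogAvg f t ≤ (log (1 + t))⁻¹ * (C * (2 * (log (1 + 2 * C) + log (1 + t)))) :=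
        mul_le_mul_of_nonneg_left ((hC d hd.le).trans (by nlinarith)) (inv_nonneg.2 hlog.le)
    _ = 2 * C * (log (1 + 2 * C) / log (1 + t) + 1) := by field_simp
    _ ≤ M := mul_le_mul_of_nonneg_left (by linarith) (by linarith)

lemma AntitoneOn.logAvg_le_cutoffLogAvg_add (hf : AntitoneOn f (Ici 0)) (hf0 : ∀ s, 0 ≤ f s)
    (hC : ∀ x, 0 ≤ x → ∫ s in 0..x, f s ≤ C * log (1 + x)) (ht : 0 < t) :
    logAvg f t ≤ cutoffLogAvg f t + (log (1 + t))⁻¹ := by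
  have h := hf.integral_le_integral_distribution_add_mul hf0
    (hf.bddAbove_superlevel hC (inv_pos.2 ht)) (inv_pos.2 ht).le ht.le
  rw [inv_mul_cancel₀ ht.ne'] at h
  rw [logAvg, cutoffLogAvg, ← mul_add_one]
  exact mul_le_mul_of_nonneg_left h (inv_nonneg.2 (log_nonneg (by linarith)))

lemma AntitoneOn.eventually_cutoffLogAvg_le_mul_logAvg_rpow (hf : AntitoneOn f (Ici 0))
    (hf0 : ∀ s, 0 ≤ f s) (hC : ∀ x, 0 ≤ x → ∫ s in 0..x, f s ≤ C * log (1 + x)) (ha : 1 < a) :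
    ∀ᶠ t in atTop, cutoffLogAvg f t ≤ a * logAvg f (t ^ a) := by
  filter_upwards [hf.eventually_distribution_inv_le_rpow hf0 hC ha, eventually_gt_atTop 0]
    with t hd ht
  have hta : 0 < t ^ a := rpow_pos_of_pos ht a
  have hlog : 0 < log (1 + t) := log_pos (by linarith)
  have hloga : 0 < log (1 + t ^ a) := log_pos (by linarith)
  have hinv : (log (1 + t))⁻¹ ≤ a * (log (1 + t ^ a))⁻¹ := by
    rw [← div_eq_mul_inv, inv_le_iff_one_le_mul₀ hlog, div_mul_eq_mul_div, one_le_div hloga]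
    exact Real.log_one_add_rpow_le ha.le ht.le
  calc cutoffLogAvg f t ≤ (log (1 + t))⁻¹ * ∫ s in 0..t ^ a, f s :=
        mul_le_mul_of_nonneg_left (hf.integral_mono_right hf0 distribution_nonneg hd)
          (inv_nonneg.2 hlog.le)
    _ ≤ a * (log (1 + t ^ a))⁻¹ * ∫ s in 0..t ^ a, f s :=
        mul_le_mul_of_nonneg_right hinv (integral_nonneg hta.le fun s _ ↦ hf0 s)
    _ = a * logAvg f (t ^ a) := by rw [logAvg, mul_assoc]

end LogAverage

namespace Bdd

variable {f g : ℝ → ℝ}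

lemma add (hf : Bdd f) (hg : Bdd g) : Bdd (f + g) :=
  let ⟨A, hA⟩ := hf
  let ⟨B, hB⟩ := hg
  ⟨A + B, fun t ↦ (abs_add_le _ _).trans (add_le_add (hA t) (hB t))⟩

lemma sub (hf : Bdd f) (hg : Bdd g) : Bdd (f - g) :=
  let ⟨A, hA⟩ := hf
  let ⟨B, hB⟩ := hg
  ⟨A + B, fun t ↦ (abs_sub _ _).trans (add_le_add (hA t) (hB t))⟩

lemma const (c : ℝ) : Bdd fun _ ↦ c := ⟨|c|, fun _ ↦ le_rfl⟩

lemma comp (hf : Bdd f) (φ : ℝ → ℝ) : Bdd (f ∘ φ) :=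
  let ⟨A, hA⟩ := hf
  ⟨A, fun t ↦ hA (φ t)⟩

lemma const_smul (hf : Bdd f) (c : ℝ) : Bdd (c • f) :=
  let ⟨A, hA⟩ := hf
  ⟨|c| * A, fun t ↦ by
    rw [Pi.smul_apply, smul_eq_mul, abs_mul]
    exact mul_le_mul_of_nonneg_left (hA t) (abs_nonneg c)⟩

lemma negPart (hf : Bdd f) : Bdd fun t ↦ max (-f t) 0 :=
  let ⟨A, hA⟩ := hf
  ⟨A, fun t ↦ by
    rw [abs_of_nonneg (le_max_right _ _)]
    exact max_le ((neg_le_abs _).trans (hA t)) ((abs_nonneg _).trans (hA t))⟩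

end Bdd

namespace GenLimit

variable (γ : GenLimit) {f g : ℝ → ℝ}

/-- The negative part of `f` is eventually zero, so `ω` does not see it. -/
lemma ω_nonneg_of_eventually (hf : Bdd f) (h : 0 ≤ᶠ[atTop] f) : 0 ≤ γ.ω f := by
  have hneg : γ.ω (fun t ↦ max (-f t) 0) = 0 := by
    refine γ.lim _ 0 hf.negPart (tendsto_const_nhds.congr' ?_)
    filter_upwards [h] with t (ht : 0 ≤ f t)
    simp [ht]
  have hpos := γ.pos _ (hf.add hf.negPart) fun t ↦ by
    simp only [Pi.add_apply]
    linarith [le_max_left (-f t) 0]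
  rwa [γ.add _ _ hf hf.negPart, hneg, add_zero] at hpos

lemma ω_mono_of_eventuallyLE (hf : Bdd f) (hg : Bdd g) (h : f ≤ᶠ[atTop] g) :
    γ.ω f ≤ γ.ω g := by
  have := γ.ω_nonneg_of_eventually (hg.sub hf) (h.mono fun _ ht ↦ sub_nonneg.2 ht)
  rw [← sub_add_cancel g f, γ.add _ _ (hg.sub hf) hf]
  linarith

lemma ω_le_of_forall_pos_eventually_le_add (hf : Bdd f) (hg : Bdd g)
    (h : ∀ δ > 0, ∀ᶠ t in atTop, f t ≤ g t + δ) : γ.ω f ≤ γ.ω g := by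
  refine le_of_forall_pos_le_add fun δ hδ ↦ ?_
  have hδ' : γ.ω (fun _ ↦ δ) = δ := γ.lim _ δ (Bdd.const δ) tendsto_const_nhds
  rw [← hδ', ← γ.add _ _ hg (Bdd.const δ)]
  exact γ.ω_mono_of_eventuallyLE hf (hg.add (Bdd.const δ)) (h δ hδ)

variable {γ}

lemma ExpInvariant.ω_le_of_forall_eventually_le_mul_rpow (hγ : γ.ExpInvariant) (hf : Bdd f)
    (hg : Bdd g) (h : ∀ a > 1, ∀ᶠ t in atTop, g t ≤ a * f (t ^ a)) : γ.ω g ≤ γ.ω f := by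
  have hle : ∀ a > 1, γ.ω g ≤ a * γ.ω f := fun a ha ↦ by
    have hfa : Bdd fun t ↦ f (t ^ a) := hf.comp _
    rw [← hγ f hf a (by linarith), ← γ.smul _ _ hfa]
    exact γ.ω_mono_of_eventuallyLE hg (hfa.const_smul a) (h a ha)
  have hlim : Tendsto (fun a ↦ a * γ.ω f) (𝓝[>] 1) (𝓝 (γ.ω f)) := by
    simpa using ((continuous_mul_const (γ.ω f)).tendsto 1).mono_left nhdsWithin_le_nhds
  exact ge_of_tendsto hlim (eventually_nhdsWithin_of_forall hle)

theorem ExpInvariant.ω_logAvg_eq_ω_cutoffLogAvg (hγ : γ.ExpInvariant) {f : ℝ → ℝ} {C : ℝ}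
    (hf : AntitoneOn f (Ici 0)) (hf0 : ∀ s, 0 ≤ f s) (hfneg : ∀ s < 0, f s = 0)
    (hC : ∀ t > 0, logAvg f t ≤ C) : γ.ω (logAvg f) = γ.ω (cutoffLogAvg f) := by
  have hCint := fun x ↦ integral_le_mul_log_of_logAvg_le hC (x := x)
  have hbdd := bdd_logAvg hf0 hfneg hC
  have hbdd' := hf.bdd_cutoffLogAvg hf0 hCint
  refine le_antisymm (γ.ω_le_of_forall_pos_eventually_le_add hbdd hbdd' fun δ hδ ↦ ?_)
    (hγ.ω_le_of_forall_eventually_le_mul_rpow hbdd hbdd' fun a ha ↦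
      hf.eventually_cutoffLogAvg_le_mul_logAvg_rpow hf0 hCint ha)
  have hsmall : ∀ᶠ t in atTop, (log (1 + t))⁻¹ ≤ δ :=
    (tendsto_log_atTop.comp (tendsto_atTop_add_const_left _ 1 tendsto_id)).inv_tendsto_atTop
      |>.eventually_le_const hδ
  filter_upwards [hsmall, eventually_gt_atTop 0] with t hδt ht
  linarith [hf.logAvg_le_cutoffLogAvg_add hf0 hCint ht]

end GenLimit

section SingularValues

variable (T : H →L[ℂ] H)

lemma sv_nonneg (s : ℝ) : 0 ≤ sv T s :=
  Real.sInf_nonneg fun _ ⟨_, _, _, _, _, hc⟩ ↦ hc ▸ norm_nonneg _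

lemma sv_of_neg {s : ℝ} (hs : s < 0) : sv T s = 0 := by
  rw [sv]
  convert Real.sInf_empty
  refine eq_empty_of_forall_notMem ?_
  rintro _ ⟨_, _, _, _, hp, _⟩
  exact hs.not_ge ((Nat.cast_nonneg _).trans hp)

lemma sv_antitoneOn : AntitoneOn (sv T) (Ici 0) := by
  intro s hs s' _ hss'
  refine csInf_le_csInf ⟨0, fun _ ⟨_, _, _, _, _, hc⟩ ↦ hc ▸ norm_nonneg _⟩
    ⟨‖T‖, 1, .one, .one _, ?_⟩ fun c ⟨p, h₁, h₂, h₃, h₄, h₅⟩ ↦ ⟨p, h₁, h₂, h₃, h₄.trans hss', h₅⟩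
  rw [sub_self, ContinuousLinearMap.toLinearMap_zero, LinearMap.range_zero]
  exact ⟨inferInstance, by simpa using hs,
    by rw [ContinuousLinearMap.one_def, ContinuousLinearMap.comp_id]⟩

end SingularValues

theorem trace_eq_distribution_cutoff_general (T : H →L[ℂ] H) (hT : MemM1Inf T)
    (γ : GenLimit) (hexp : γ.ExpInvariant) :
    γ.ω (avg T) =
      γ.ω (fun t => (Real.log (1 + t))⁻¹ * ∫ s in (0:ℝ)..(dFun T t⁻¹), sv T s) :=
  let ⟨_, _, hC⟩ := hT
  hexp.ω_logAvg_eq_ω_cutoffLogAvg (sv_antitoneOn T) (sv_nonneg T) (fun _ ↦ sv_of_neg T) hC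

theorem trace_eq_distribution_cutoff (T : H →L[ℂ] H) (hT : MemM1Inf T)
    (hTpos : T.IsPositive) (γ : GenLimit) (hexp : γ.ExpInvariant) :
    γ.ω (avg T) =
      γ.ω (fun t => (Real.log (1 + t))⁻¹ * ∫ s in (0:ℝ)..(dFun T t⁻¹), sv T s) :=
  trace_eq_distribution_cutoff_general T hT γ hexp
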